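/- arXiv:2505.18558 — 2 statements merged into one kernel-verified Lean document; each statement's English description precedes it below -/
import Mathlib

section
/- Let X and H be finite types, let p̃ be a probability mass function on X, and let p : ℝ → X → H → ℝ be such that p θ x h > 0 for all (θ, x, h) with θ near θ₀, θ ↦ p θ x h is differentiable at θ₀ for each (x,h), and ∑_{x,h} p θ x h = 1 for all θ. Write pM θ x = ∑_h p θ x h for the marginal and post θ x h = p θ x h / pM θ x for the posterior. Then the derivative at θ₀ of θ ↦ KL(p̃ ‖ pM θ) equals −∑_x p̃(x) ∑_h post θ₀ x h · deriv (fun θ => log (p θ x h)) θ₀. -/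
/-!
The KL divergence depends on `θ` only through the cross-entropy term `-∑ₓ p̃(x) log pM θ x`,
so its derivative is `-∑ₓ p̃(x) · ∂log pM θ x`. Fisher's identity `∂pθ = pθ · ∂log pθ`, summed
over the latent variable `h` and divided by the marginal, turns `∂log pM θ x` into the posterior
expectation of the score `∂log p θ x h`.
-/

open Finset Real

theorem hasDerivAt_mul_log_div {f : ℝ → ℝ} {f' a : ℝ} (hf : HasDerivAt f f' a) (ha : f a ≠ 0)
    (c : ℝ) : HasDerivAt (fun t => c * log (c / f t)) (-(c * (f' / f a))) a := by
  rcases eq_or_ne c 0 with rfl | hc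
  · simpa using hasDerivAt_const a (0 : ℝ)
  have hlog_div : (fun t => c * (log c - log (f t))) =ᶠ[nhds a] fun t => c * log (c / f t) := by
    filter_upwards [hf.continuousAt.eventually_ne ha] with t ht
    rw [log_div hc ht]
  have hderiv := (((hasDerivAt_const a (log c)).sub (hf.log ha)).const_mul c).congr_of_eventuallyEq
    hlog_div.symm
  simpa using hderiv

theorem eq_mul_deriv_log_of_hasDerivAt {f : ℝ → ℝ} {f' a : ℝ} (hf : HasDerivAt f f' a)
    (ha : f a ≠ 0) : f' = f a * deriv (fun t => log (f t)) a := by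
  rw [(hf.log ha).deriv, mul_div_cancel₀ _ ha]

theorem hasDerivAt_sum_mul_deriv_log {ι : Type*} (s : Finset ι) {p : ℝ → ι → ℝ} {a : ℝ}
    (hdiff : ∀ i ∈ s, DifferentiableAt ℝ (fun t => p t i) a) (hne : ∀ i ∈ s, p a i ≠ 0) :
    HasDerivAt (fun t => ∑ i ∈ s, p t i) (∑ i ∈ s, p a i * deriv (fun t => log (p t i)) a) a :=
  HasDerivAt.fun_sum fun i hi => by
    have hi' := (hdiff i hi).hasDerivAt
    rwa [eq_mul_deriv_log_of_hasDerivAt hi' (hne i hi)] at hi'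

theorem jsa_theta_gradient_general
    {X H : Type*} [Fintype X] [Fintype H]
    (ptilde : X → ℝ)
    (p : ℝ → X → H → ℝ) (θ₀ : ℝ)
    (hpos : ∀ᶠ θ in nhds θ₀, ∀ x h, 0 < p θ x h)
    (hdiff : ∀ x h, DifferentiableAt ℝ (fun θ => p θ x h) θ₀)
    (hnorm : ∀ θ, ∑ x, ∑ h, p θ x h = 1) :
    deriv (fun θ => ∑ x, ptilde x * Real.log (ptilde x / ∑ h, p θ x h)) θ₀ =
      -∑ x, ptilde x * ∑ h, (p θ₀ x h / ∑ h', p θ₀ x h') *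
        deriv (fun θ => Real.log (p θ x h)) θ₀ := by
  have : Nonempty H := by
    by_contra hH
    simpa [not_nonempty_iff.mp hH] using hnorm θ₀
  have hpos₀ : ∀ x h, 0 < p θ₀ x h := hpos.self_of_nhds
  have hmarginal_ne : ∀ x, ∑ h, p θ₀ x h ≠ 0 := fun x =>
    (sum_pos (fun h _ => hpos₀ x h) univ_nonempty).ne'
  have hmarginal : ∀ x, HasDerivAt (fun θ => ∑ h, p θ x h)
      (∑ h, p θ₀ x h * deriv (fun θ => log (p θ x h)) θ₀) θ₀ := fun x =>
    hasDerivAt_sum_mul_deriv_log univ (fun h _ => hdiff x h) (fun h _ => (hpos₀ x h).ne')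
  rw [(HasDerivAt.fun_sum fun x _ =>
      hasDerivAt_mul_log_div (hmarginal x) (hmarginal_ne x) (ptilde x)).deriv, ← sum_neg_distrib]
  simp only [sum_div, mul_div_right_comm]

/-- First JSA stationarity equation (Eq. 3): the gradient of KL[p̃(x) ‖ p_θ(x)] equals minus
the expectation E_{p̃(x) p_θ(h|x)}[∂/∂θ log p_θ(x,h)]. -/
theorem jsa_theta_gradient
    {X H : Type*} [Fintype X] [Fintype H]
    (ptilde : X → ℝ) (hpt : ∀ x, 0 ≤ ptilde x) (hptsum : ∑ x, ptilde x = 1)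
    (p : ℝ → X → H → ℝ) (θ₀ : ℝ)
    (hpos : ∀ᶠ θ in nhds θ₀, ∀ x h, 0 < p θ x h)
    (hdiff : ∀ x h, DifferentiableAt ℝ (fun θ => p θ x h) θ₀)
    (hnorm : ∀ θ, ∑ x, ∑ h, p θ x h = 1) :
    deriv (fun θ => ∑ x, ptilde x * Real.log (ptilde x / ∑ h, p θ x h)) θ₀ =
      -∑ x, ptilde x * ∑ h, (p θ₀ x h / ∑ h', p θ₀ x h') *
        deriv (fun θ => Real.log (p θ x h)) θ₀ :=
  jsa_theta_gradient_general ptilde p θ₀ hpos hdiff hnorm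
end

section
/- Let X, Y, H be finite types, let p̃X be a probability mass function on X and p̃XY a probability mass function on X × Y whose X-marginal may differ from p̃X. Let p : ℝ → X → Y → H → ℝ satisfy p θ x y h > 0 for θ near θ₀, θ ↦ p θ x y h differentiable at θ₀ for each (x,y,h), and ∑_{x,y,h} p θ x y h = 1 for all θ. Write pX θ x = ∑_{y,h} p θ x y h, pXY θ x y = ∑_h p θ x y h, postYH θ x y h = p θ x y h / pX θ x, and postH θ x y h = p θ x y h / pXY θ x y. Then the derivative at θ₀ of θ ↦ KL(p̃X ‖ pX θ) + KL(p̃XY ‖ pXY θ) equals −(∑_x p̃X(x) ∑_{y,h} postYH θ₀ x y h · deriv (fun θ => log (p θ x y h)) θ₀ + ∑_{x,y} p̃XY(x,y) ∑_h postH θ₀ x y h · deriv (fun θ => log (p θ x y h)) θ₀). -/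
/-!
Each KL term is a sum of terms `a * log (a / m θ)` where `m = ∑ i, f i` is a marginal of `p θ`.
Its derivative is `-a * m' / m`, and `m' / m` is the posterior expectation of the score
`∂ log f i`, because `(f i / m) * ((f i)' / f i)` sums to `m' / m` (Fisher's identity).
-/

open Real

section MarginalLogLikelihood

variable {ι : Type*} [Fintype ι] {f : ι → ℝ → ℝ} {θ₀ : ℝ}

theorem hasDerivAt_mul_log_div_sum (a : ℝ) {f' : ι → ℝ}
    (hf : ∀ i, HasDerivAt (f i) (f' i) θ₀) (hpos : ∀ i, 0 < f i θ₀) :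
    HasDerivAt (fun θ => a * log (a / ∑ i, f i θ))
      (-(a * ((∑ i, f' i) / ∑ i, f i θ₀))) θ₀ := by
  -- For empty `ι` both sides vanish, through `a / 0 = 0`, `log 0 = 0` and `0 / 0 = 0`.
  rcases isEmpty_or_nonempty ι with hι | hι
  · simpa using hasDerivAt_const θ₀ (0 : ℝ)
  rcases eq_or_ne a 0 with rfl | ha
  · simpa using hasDerivAt_const θ₀ (0 : ℝ)
  have hS : 0 < ∑ i, f i θ₀ := Finset.sum_pos (fun i _ => hpos i) Finset.univ_nonempty
  have hsum : HasDerivAt (fun θ => ∑ i, f i θ) (∑ i, f' i) θ₀ :=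
    HasDerivAt.fun_sum fun i _ => hf i
  have hlog := (((hsum.inv hS.ne').const_mul a).log
    (mul_ne_zero ha (inv_ne_zero hS.ne'))).const_mul a
  simp only [Pi.inv_apply, ← div_eq_mul_inv] at hlog
  refine hlog.congr_deriv ?_
  field_simp

theorem sum_posterior_mul_deriv_log {f' : ι → ℝ} (hf : ∀ i, HasDerivAt (f i) (f' i) θ₀)
    (hne : ∀ i, f i θ₀ ≠ 0) :
    ∑ i, (f i θ₀ / ∑ j, f j θ₀) * deriv (fun θ => log (f i θ)) θ₀ =
      (∑ i, f' i) / ∑ i, f i θ₀ := by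
  rw [Finset.sum_div]
  refine Finset.sum_congr rfl fun i _ => ?_
  rw [((hf i).log (hne i)).deriv]
  field_simp [hne i]

theorem hasDerivAt_mul_log_div_sum_eq_posterior (a : ℝ)
    (hf : ∀ i, DifferentiableAt ℝ (f i) θ₀) (hpos : ∀ i, 0 < f i θ₀) :
    HasDerivAt (fun θ => a * log (a / ∑ i, f i θ))
      (-(a * ∑ i, (f i θ₀ / ∑ j, f j θ₀) * deriv (fun θ => log (f i θ)) θ₀)) θ₀ := by
  have hder : ∀ i, HasDerivAt (f i) (deriv (f i) θ₀) θ₀ := fun i => (hf i).hasDerivAt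
  rw [sum_posterior_mul_deriv_log hder fun i => (hpos i).ne']
  exact hasDerivAt_mul_log_div_sum a hder hpos

end MarginalLogLikelihood

theorem jsa_semi_theta_gradient_general
    {X Y H : Type*} [Fintype X] [Fintype Y] [Fintype H]
    (ptX : X → ℝ)
    (ptXY : X × Y → ℝ)
    (p : ℝ → X → Y → H → ℝ) (θ₀ : ℝ)
    (hpos : ∀ᶠ θ in nhds θ₀, ∀ x y h, 0 < p θ x y h)
    (hdiff : ∀ x y h, DifferentiableAt ℝ (fun θ => p θ x y h) θ₀) :
    deriv (fun θ =>
        (∑ x, ptX x * Real.log (ptX x / ∑ y, ∑ h, p θ x y h)) +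
          ∑ z : X × Y, ptXY z * Real.log (ptXY z / ∑ h, p θ z.1 z.2 h)) θ₀ =
      -((∑ x, ptX x * ∑ y, ∑ h,
            (p θ₀ x y h / ∑ y', ∑ h', p θ₀ x y' h') *
              deriv (fun θ => Real.log (p θ x y h)) θ₀) +
          ∑ z : X × Y, ptXY z * ∑ h,
            (p θ₀ z.1 z.2 h / ∑ h', p θ₀ z.1 z.2 h') *
              deriv (fun θ => Real.log (p θ z.1 z.2 h)) θ₀) := by
  have hpos₀ : ∀ x y h, 0 < p θ₀ x y h := hpos.self_of_nhds
  have hX : ∀ x, HasDerivAt (fun θ => ptX x * log (ptX x / ∑ y, ∑ h, p θ x y h))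
      (-(ptX x * ∑ y, ∑ h, (p θ₀ x y h / ∑ y', ∑ h', p θ₀ x y' h') *
        deriv (fun θ => log (p θ x y h)) θ₀)) θ₀ := fun x => by
    simpa only [Fintype.sum_prod_type] using
      hasDerivAt_mul_log_div_sum_eq_posterior (f := fun (i : Y × H) θ => p θ x i.1 i.2) (ptX x)
        (fun i => hdiff x i.1 i.2) fun i => hpos₀ x i.1 i.2
  have hXY : ∀ z : X × Y, HasDerivAt (fun θ => ptXY z * log (ptXY z / ∑ h, p θ z.1 z.2 h))
      (-(ptXY z * ∑ h, (p θ₀ z.1 z.2 h / ∑ h', p θ₀ z.1 z.2 h') *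
        deriv (fun θ => log (p θ z.1 z.2 h)) θ₀)) θ₀ := fun z =>
    hasDerivAt_mul_log_div_sum_eq_posterior (ptXY z) (fun h => hdiff z.1 z.2 h)
      fun h => hpos₀ z.1 z.2 h
  refine ((HasDerivAt.fun_sum fun x _ => hX x).add
    (HasDerivAt.fun_sum fun z _ => hXY z)).deriv.trans ?_
  simp only [Finset.sum_neg_distrib, neg_add]

/-- Semi-supervised JSA θ-stationarity equation (Eq. 5): the gradient of
KL[p̃(x) ‖ p_θ(x)] + KL[p̃(x,y) ‖ p_θ(x,y)] equals minus the sum of the expectations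
E_{p̃(x) p_θ(y,h|x)}[∂/∂θ log p_θ(x,y,h)] + E_{p̃(x,y) p_θ(h|x,y)}[∂/∂θ log p_θ(x,y,h)]. -/
theorem jsa_semi_theta_gradient
    {X Y H : Type*} [Fintype X] [Fintype Y] [Fintype H]
    (ptX : X → ℝ) (hptX : ∀ x, 0 ≤ ptX x) (hptXsum : ∑ x, ptX x = 1)
    (ptXY : X × Y → ℝ) (hptXY : ∀ z, 0 ≤ ptXY z) (hptXYsum : ∑ z, ptXY z = 1)
    (p : ℝ → X → Y → H → ℝ) (θ₀ : ℝ)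
    (hpos : ∀ᶠ θ in nhds θ₀, ∀ x y h, 0 < p θ x y h)
    (hdiff : ∀ x y h, DifferentiableAt ℝ (fun θ => p θ x y h) θ₀)
    (hnorm : ∀ θ, ∑ x, ∑ y, ∑ h, p θ x y h = 1) :
    deriv (fun θ =>
        (∑ x, ptX x * Real.log (ptX x / ∑ y, ∑ h, p θ x y h)) +
          ∑ z : X × Y, ptXY z * Real.log (ptXY z / ∑ h, p θ z.1 z.2 h)) θ₀ =
      -((∑ x, ptX x * ∑ y, ∑ h,
            (p θ₀ x y h / ∑ y', ∑ h', p θ₀ x y' h') *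
              deriv (fun θ => Real.log (p θ x y h)) θ₀) +
          ∑ z : X × Y, ptXY z * ∑ h,
            (p θ₀ z.1 z.2 h / ∑ h', p θ₀ z.1 z.2 h') *
              deriv (fun θ => Real.log (p θ z.1 z.2 h)) θ₀) :=
  jsa_semi_theta_gradient_general ptX ptXY p θ₀ hpos hdiff
end
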